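/- Let p < 0 and q ∈ ℝ. Any two 4×4 real skew-symmetric matrices A, B with Pf(A) = Pf(B) = p and s(A) = s(B) = q are symplectically congruent: there exists P with Pᵀ J P = J and Pᵀ A P = B. -/

import Mathlib

/-!
The Hamiltonian matrix `T = -J A` (note `J⁻¹ = -J`) is self-adjoint for the symplectic form
`ω x y = x ⬝ᵥ J y`, and a direct computation gives `T² - s(A) T + Pf(A) = 0`. For `p < 0` the
roots `l, m` of `x² - q x + p` are real and distinct, so `T` is diagonalisable with eigenvalues
`l, m`. Eigenspaces of a self-adjoint map for distinct eigenvalues are `ω`-orthogonal, and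
each one contains a pair `u, v` with `ω u v = 1` (take `u` in the range of `T - m`, and `v`
a multiple of `(T - m) J u`). The basis `u₁, v₁, u₂, v₂` is symplectic and turns `A = J T` into
`J · diag(l, l, m, m)`, which depends only on `p` and `q`.
-/

open Matrix

/-- The standard 4×4 symplectic matrix. -/
def J4 : Matrix (Fin 4) (Fin 4) ℝ :=
  !![0, 1, 0, 0; -1, 0, 0, 0; 0, 0, 0, 1; 0, 0, -1, 0]

/-- Pfaffian of a 4×4 skew-symmetric matrix: `af - be + cd`. -/
def pf4 (A : Matrix (Fin 4) (Fin 4) ℝ) : ℝ :=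
  A 0 1 * A 2 3 - A 0 2 * A 1 3 + A 0 3 * A 1 2

/-- Sum function of a 4×4 skew-symmetric matrix: `a + f`. -/
def s4 (A : Matrix (Fin 4) (Fin 4) ℝ) : ℝ :=
  A 0 1 + A 2 3

namespace Matrix

variable {n : Type*} [Fintype n]

def SymplecticallyCongruent {R : Type*} [CommRing R] (J A B : Matrix n n R) : Prop :=
  ∃ P : Matrix n n R, Pᵀ * J * P = J ∧ Pᵀ * A * P = B

namespace SymplecticallyCongruent

variable {R : Type*} [CommRing R] {J A B C : Matrix n n R}

theorem trans (hAB : SymplecticallyCongruent J A B) (hBC : SymplecticallyCongruent J B C) :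
    SymplecticallyCongruent J A C := by
  obtain ⟨P, hPJ, hPA⟩ := hAB
  obtain ⟨Q, hQJ, hQB⟩ := hBC
  have hcomp (M : Matrix n n R) : (P * Q)ᵀ * M * (P * Q) = Qᵀ * (Pᵀ * M * P) * Q := by
    simp only [transpose_mul, Matrix.mul_assoc]
  exact ⟨P * Q, by rw [hcomp, hPJ, hQJ], by rw [hcomp, hPA, hQB]⟩

theorem symm [DecidableEq n] (hJ : IsUnit J.det) (hAB : SymplecticallyCongruent J A B) :
    SymplecticallyCongruent J B A := by
  obtain ⟨P, hPJ, rfl⟩ := hAB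
  have hP : IsUnit P.det := by
    have h := congrArg det hPJ
    rw [det_mul, det_mul, det_transpose, mul_comm _ J.det, mul_assoc] at h
    exact IsUnit.of_mul_eq_one _ (hJ.mul_left_cancel (h.trans (mul_one _).symm))
  have hcancel (M : Matrix n n R) : P⁻¹ᵀ * (Pᵀ * M * P) * P⁻¹ = M := by
    rw [transpose_nonsing_inv, ← Matrix.mul_assoc, ← Matrix.mul_assoc,
      nonsing_inv_mul _ (by rwa [det_transpose]), Matrix.one_mul, mul_nonsing_inv_cancel_right _ _ hP]
  exact ⟨P⁻¹, by conv_lhs => rw [← hPJ, hcancel], hcancel A⟩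

end SymplecticallyCongruent

section Form

variable {R : Type*} [CommRing R]

theorem mulVec_dotProduct_mulVec_of_transpose_mul_eq {J T : Matrix n n R} (hT : Tᵀ * J = J * T)
    (x y : n → R) : (T *ᵥ x) ⬝ᵥ (J *ᵥ y) = x ⬝ᵥ (J *ᵥ (T *ᵥ y)) := by
  rw [← vecMul_transpose, ← dotProduct_mulVec, mulVec_mulVec, hT, ← mulVec_mulVec]

theorem mul_mul_transpose_apply (M J : Matrix n n R) (i j : n) :
    (M * J * Mᵀ) i j = M i ⬝ᵥ (J *ᵥ M j) := by
  rw [dotProduct_mulVec, mul_apply]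
  simp [dotProduct, mul_apply, vecMul, Finset.sum_mul]

theorem mul_transpose_eq_transpose_mul_diagonal [DecidableEq n] {T M : Matrix n n R} {d : n → R}
    (h : ∀ i, T *ᵥ M i = d i • M i) : T * Mᵀ = Mᵀ * diagonal d := by
  ext i j
  have hji := congrFun (h j) i
  rw [Pi.smul_apply, smul_eq_mul] at hji
  rw [mul_diagonal, transpose_apply, mul_comm, ← hji]
  rfl

end Form

theorem dotProduct_mulVec_eq_zero_of_eigenvalue_ne {K : Type*} [Field K] {J T : Matrix n n K}
    (hT : Tᵀ * J = J * T) {l m : K} (hlm : l ≠ m) {x y : n → K}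
    (hx : T *ᵥ x = l • x) (hy : T *ᵥ y = m • y) : x ⬝ᵥ (J *ᵥ y) = 0 := by
  have h := mulVec_dotProduct_mulVec_of_transpose_mul_eq hT x y
  rw [hx, hy, smul_dotProduct, mulVec_smul, dotProduct_smul, smul_eq_mul, smul_eq_mul] at h
  have h' : (l - m) * (x ⬝ᵥ (J *ᵥ y)) = 0 := by linear_combination h
  exact (mul_eq_zero.mp h').resolve_left (sub_ne_zero.mpr hlm)

theorem exists_eigenvectors_dotProduct_mulVec_eq_one [DecidableEq n] {J T : Matrix n n ℝ}
    (hJ : J * J = -1) (hT : Tᵀ * J = J * T) {l m : ℝ} (hlm : l ≠ m)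
    (hTlm : (T - l • 1) * (T - m • 1) = 0) (hTm : T ≠ m • 1) :
    ∃ u v : n → ℝ, T *ᵥ u = l • u ∧ T *ᵥ v = l • v ∧ u ⬝ᵥ (J *ᵥ v) = 1 := by
  set E := T - m • 1 with hE
  have hTE : T * E = l • E := by
    rw [← sub_eq_zero, ← hTlm, Matrix.sub_mul, smul_mul_assoc, Matrix.one_mul]
  have hEE : E * E = (l - m) • E := by
    rw [Matrix.sub_mul, hTE, smul_mul_assoc, Matrix.one_mul, sub_smul]
  have hET : Eᵀ * J = J * E := by
    simp only [hE, transpose_sub, transpose_smul, transpose_one, Matrix.sub_mul, Matrix.mul_sub,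
      smul_mul_assoc, mul_smul_comm, Matrix.one_mul, Matrix.mul_one, hT]
  obtain ⟨x, hx⟩ : ∃ x, E *ᵥ x ≠ 0 := by
    by_contra! h
    exact hTm (sub_eq_zero.mp (ext_iff_mulVec.mpr fun v => (h v).trans (zero_mulVec v).symm))
  set u := E *ᵥ x
  have hEu : E *ᵥ u = (l - m) • u := by rw [mulVec_mulVec, hEE, smul_mulVec]
  have hω : u ⬝ᵥ (J *ᵥ (E *ᵥ (J *ᵥ u))) = -((l - m) * (u ⬝ᵥ u)) := by
    rw [← mulVec_dotProduct_mulVec_of_transpose_mul_eq hET, hEu, mulVec_mulVec, hJ, neg_mulVec,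
      one_mulVec, smul_dotProduct, dotProduct_neg, smul_eq_mul, mul_neg]
  have hu : u ⬝ᵥ u ≠ 0 := dotProduct_self_eq_zero.not.mpr hx
  refine ⟨u, -((l - m) * (u ⬝ᵥ u))⁻¹ • (E *ᵥ (J *ᵥ u)), ?_, ?_, ?_⟩
  · rw [mulVec_mulVec, hTE, smul_mulVec]
  · rw [mulVec_smul, mulVec_mulVec, hTE, smul_mulVec, smul_comm]
  · rw [mulVec_smul, dotProduct_smul, hω, smul_eq_mul]
    field_simp [sub_ne_zero.mpr hlm, hu]

end Matrix

theorem J4_transpose : J4ᵀ = -J4 := by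
  ext i j; fin_cases i <;> fin_cases j <;> simp [J4]

theorem J4_mul_J4 : J4 * J4 = -1 := by
  ext i j; fin_cases i <;> fin_cases j <;> simp [J4, mul_apply, Fin.sum_univ_four, one_apply]

theorem isUnit_det_J4 : IsUnit J4.det :=
  isUnit_det_of_right_inverse (B := -J4) (by rw [Matrix.mul_neg, J4_mul_J4, neg_neg])

theorem fin_four_eq_of_transpose_eq_neg {A : Matrix (Fin 4) (Fin 4) ℝ} (hA : Aᵀ = -A) :
    A = !![0, A 0 1, A 0 2, A 0 3; -A 0 1, 0, A 1 2, A 1 3;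
      -A 0 2, -A 1 2, 0, A 2 3; -A 0 3, -A 1 3, -A 2 3, 0] := by
  have h (i j : Fin 4) : A j i = -A i j := congrFun (congrFun hA i) j
  ext i j
  have hij := h i j
  have hii := h i i
  fin_cases i <;> fin_cases j <;> simp at hij hii ⊢ <;> linarith

theorem J4_mul_mul_J4_mul {A : Matrix (Fin 4) (Fin 4) ℝ} (hA : Aᵀ = -A) :
    J4 * A * (J4 * A) = -s4 A • (J4 * A) - pf4 A • 1 := by
  rw [fin_four_eq_of_transpose_eq_neg hA]
  ext i j
  fin_cases i <;> fin_cases j <;> simp [J4, pf4, s4, mul_apply, Fin.sum_univ_four, one_apply] <;> ring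

theorem pf4_smul_J4 (c : ℝ) : pf4 (c • J4) = c ^ 2 := by simp [pf4, J4]; ring

theorem s4_smul_J4 (c : ℝ) : s4 (c • J4) = 2 * c := by simp [s4, J4]; ring

theorem of_mul_J4_mul_transpose {u₁ v₁ u₂ v₂ : Fin 4 → ℝ}
    (h₁ : u₁ ⬝ᵥ (J4 *ᵥ v₁) = 1) (h₂ : u₂ ⬝ᵥ (J4 *ᵥ v₂) = 1)
    (hu₁u₂ : u₁ ⬝ᵥ (J4 *ᵥ u₂) = 0) (hu₁v₂ : u₁ ⬝ᵥ (J4 *ᵥ v₂) = 0)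
    (hv₁u₂ : v₁ ⬝ᵥ (J4 *ᵥ u₂) = 0) (hv₁v₂ : v₁ ⬝ᵥ (J4 *ᵥ v₂) = 0) :
    of ![u₁, v₁, u₂, v₂] * J4 * (of ![u₁, v₁, u₂, v₂])ᵀ = J4 := by
  set M := of ![u₁, v₁, u₂, v₂]
  have hskew : (M * J4 * Mᵀ)ᵀ = -(M * J4 * Mᵀ) := by
    simp [transpose_mul, J4_transpose, Matrix.mul_assoc]
  rw [fin_four_eq_of_transpose_eq_neg hskew]
  have hM (i : Fin 4) : M i = ![u₁, v₁, u₂, v₂] i := rfl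
  simp only [mul_mul_transpose_apply, hM, cons_val, h₁, h₂, hu₁u₂, hu₁v₂, hv₁u₂, hv₁v₂, neg_zero]
  rfl

theorem symplecticallyCongruent_J4_mul_diagonal {A : Matrix (Fin 4) (Fin 4) ℝ} (hA : Aᵀ = -A)
    {l m : ℝ} (hlm : l ≠ m) (hpf : pf4 A = l * m) (hs : s4 A = l + m) :
    SymplecticallyCongruent J4 A (J4 * diagonal ![l, l, m, m]) := by
  set T := -(J4 * A)
  have hJT : J4 * T = A := by rw [Matrix.mul_neg, ← Matrix.mul_assoc, J4_mul_J4]; simp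
  have hTJ : Tᵀ * J4 = J4 * T := by
    rw [hJT, transpose_neg, transpose_mul, hA, J4_transpose]
    simp [Matrix.mul_assoc, J4_mul_J4]
  have hchar (a b : ℝ) (hab : a + b = l + m) (hab' : a * b = l * m) :
      (T - a • 1) * (T - b • 1) = 0 := by
    have hsq := J4_mul_mul_J4_mul hA
    simp only [T, Matrix.sub_mul, Matrix.mul_sub, Matrix.neg_mul, Matrix.mul_neg,
      smul_mul_assoc, mul_smul_comm, Matrix.one_mul, Matrix.mul_one, hsq, hpf, hs]
    rw [← hab, ← hab']
    module
  have hscalar (c : ℝ) : T ≠ c • 1 := by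
    -- `T = c • 1` gives `A = c • J4`, so `(l - m)² = (l + m)² - 4 l m = 4 c² - 4 c² = 0`.
    intro hc
    rw [← hJT, hc, mul_smul_comm, Matrix.mul_one] at hpf hs
    rw [pf4_smul_J4] at hpf
    rw [s4_smul_J4] at hs
    exact hlm (sub_eq_zero.mp (pow_eq_zero_iff two_ne_zero |>.mp
      (by linear_combination -(l + m + 2 * c) * hs + 4 * hpf)))
  obtain ⟨u₁, v₁, hu₁, hv₁, h₁⟩ := exists_eigenvectors_dotProduct_mulVec_eq_one J4_mul_J4 hTJ hlm
    (hchar l m rfl rfl) (hscalar m)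
  obtain ⟨u₂, v₂, hu₂, hv₂, h₂⟩ := exists_eigenvectors_dotProduct_mulVec_eq_one J4_mul_J4 hTJ
    hlm.symm (hchar m l (add_comm m l) (mul_comm m l)) (hscalar l)
  have hω {x y : Fin 4 → ℝ} := dotProduct_mulVec_eq_zero_of_eigenvalue_ne hTJ hlm (x := x) (y := y)
  set M := of ![u₁, v₁, u₂, v₂]
  have hG : M * J4 * Mᵀ = J4 :=
    of_mul_J4_mul_transpose h₁ h₂ (hω hu₁ hu₂) (hω hu₁ hv₂) (hω hv₁ hu₂) (hω hv₁ hv₂)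
  have hTM : T * Mᵀ = Mᵀ * diagonal ![l, l, m, m] :=
    mul_transpose_eq_transpose_mul_diagonal fun i => by fin_cases i <;> assumption
  refine ⟨Mᵀ, by rw [transpose_transpose, hG], ?_⟩
  calc Mᵀᵀ * A * Mᵀ = M * J4 * (T * Mᵀ) := by
        rw [transpose_transpose, ← hJT]
        simp only [Matrix.mul_assoc]
    _ = J4 * diagonal ![l, l, m, m] := by rw [hTM, ← Matrix.mul_assoc, hG]

theorem exists_ne_add_eq_mul_eq {p q : ℝ} (h : 4 * p < q ^ 2) :
    ∃ l m : ℝ, l ≠ m ∧ l + m = q ∧ l * m = p := by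
  set s := √(q ^ 2 - 4 * p)
  have hs : 0 < s := Real.sqrt_pos.mpr (by linarith)
  have hs2 : s ^ 2 = q ^ 2 - 4 * p := Real.sq_sqrt (by linarith)
  refine ⟨(q - s) / 2, (q + s) / 2, by linarith, by ring, by linear_combination -hs2 / 4⟩

theorem orbit_classification_neg (p q : ℝ) (hp : p < 0)
    (A B : Matrix (Fin 4) (Fin 4) ℝ)
    (hA : Aᵀ = -A) (hB : Bᵀ = -B)
    (hApf : pf4 A = p) (hBpf : pf4 B = p)
    (hAs : s4 A = q) (hBs : s4 B = q) :
    ∃ P : Matrix (Fin 4) (Fin 4) ℝ, Pᵀ * J4 * P = J4 ∧ Pᵀ * A * P = B := by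
  obtain ⟨l, m, hlm, hsum, hprod⟩ := exists_ne_add_eq_mul_eq (p := p) (q := q)
    (by linarith [sq_nonneg q])
  have hAN := symplecticallyCongruent_J4_mul_diagonal hA hlm (hApf.trans hprod.symm)
    (hAs.trans hsum.symm)
  have hBN := symplecticallyCongruent_J4_mul_diagonal hB hlm (hBpf.trans hprod.symm)
    (hBs.trans hsum.symm)
  exact hAN.trans (hBN.symm isUnit_det_J4)
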